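/- Let α > 0. There exists a constant c₃ > 0 such that for every w ∈ 𝔻, I₁(w) := ∬_{𝔻} (1 - |z|²)^{α+1} (1 - |w|²)^{α} / (2 |1 - z̄ w|^{α+1} |z - w|) dx dy ≤ c₃ (1 - |w|²)^{α}. -/

import Mathlib

/-!
Since `1 - |z|² = (1 - |z|)(1 + |z|) ≤ 2 (1 - |z| |w|) ≤ 2 |1 - z̄ w|` on the closed disk, the
factor `(1 - |z|²)^(α+1) / |1 - z̄ w|^(α+1)` is at most `2^(α+1)`, so the integrand is bounded by
`2^α (1 - |w|²)^α / |z - w|`. The singularity `1 / |z - w|` is integrable in the plane, and since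
`𝔻 ⊆ B(w, 2)` its integral over `𝔻` is at most that of `1 / |z|` over `B(0, 2)`, independently
of `w`.
-/

open Real Complex Set MeasureTheory Metric

lemma preimage_sub_right_ball {E : Type*} [SeminormedAddCommGroup E] (w : E) (r : ℝ) :
    (· - w) ⁻¹' ball 0 r = ball w r := by
  ext z
  simp [dist_eq_norm]

lemma setIntegral_ball_inv_norm_sub {E : Type*} [NormedAddCommGroup E] [MeasurableSpace E]
    [BorelSpace E] {μ : Measure E} [μ.IsAddRightInvariant] (w : E) (r : ℝ) :
    ∫ z in ball w r, ‖z - w‖⁻¹ ∂μ = ∫ z in ball 0 r, ‖z‖⁻¹ ∂μ := by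
  rw [← preimage_sub_right_ball w r]
  exact (measurePreserving_sub_right μ w).setIntegral_preimage_emb
    (measurableEmbedding_subRight w) (fun z => ‖z‖⁻¹) (ball 0 r)

section InverseNorm

variable {E : Type*} [NormedAddCommGroup E] [NormedSpace ℝ E] [FiniteDimensional ℝ E]
  [MeasurableSpace E] [BorelSpace E] {μ : Measure E} [μ.IsAddHaarMeasure]

lemma integrableOn_ball_inv_norm (hE : 2 ≤ Module.finrank ℝ E) (r : ℝ) :
    IntegrableOn (fun z : E => ‖z‖⁻¹) (ball 0 r) μ :=
  integrableOn_ball_of_norm_le_rpow (C := 1) (α := 1) (by omega) (by exact_mod_cast hE)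
    (ae_of_all _ fun z => by simp [Real.rpow_neg_one]) (by fun_prop)

lemma integrableOn_ball_inv_norm_sub (hE : 2 ≤ Module.finrank ℝ E) (w : E) (r : ℝ) :
    IntegrableOn (fun z : E => ‖z - w‖⁻¹) (ball w r) μ := by
  rw [← preimage_sub_right_ball w r]
  exact ((measurePreserving_sub_right μ w).integrableOn_comp_preimage
    (measurableEmbedding_subRight w)).2 (integrableOn_ball_inv_norm hE r)

lemma setIntegral_inv_norm_sub_le (hE : 2 ≤ Module.finrank ℝ E) {s : Set E} {w : E} {r : ℝ}
    (hs : s ⊆ ball w r) :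
    ∫ z in s, ‖z - w‖⁻¹ ∂μ ≤ ∫ z in ball 0 r, ‖z‖⁻¹ ∂μ := by
  rw [← setIntegral_ball_inv_norm_sub w r]
  exact setIntegral_mono_set (integrableOn_ball_inv_norm_sub hE w r)
    (ae_of_all _ fun z => by positivity) (ae_of_all _ hs)

end InverseNorm

section Integrand

variable {z w : ℂ}

lemma one_sub_norm_sq_le_two_mul_norm_one_sub_conj_mul (hz : ‖z‖ ≤ 1) (hw : ‖w‖ ≤ 1) :
    1 - ‖z‖ ^ 2 ≤ 2 * ‖1 - (starRingEnd ℂ) z * w‖ := by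
  have h := norm_sub_norm_le (1 : ℂ) ((starRingEnd ℂ) z * w)
  rw [norm_one, norm_mul, RCLike.norm_conj] at h
  nlinarith [norm_nonneg z, norm_nonneg w]

lemma disk_integrand_nonneg (α : ℝ) (hz : ‖z‖ ≤ 1) (hw : ‖w‖ ≤ 1) :
    0 ≤ (1 - ‖z‖ ^ 2) ^ (α + 1) * (1 - ‖w‖ ^ 2) ^ α /
      (2 * ‖1 - (starRingEnd ℂ) z * w‖ ^ (α + 1) * ‖z - w‖) := by
  have hz2 : 0 ≤ 1 - ‖z‖ ^ 2 := by nlinarith [norm_nonneg z]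
  have hw2 : 0 ≤ 1 - ‖w‖ ^ 2 := by nlinarith [norm_nonneg w]
  positivity

lemma disk_integrand_le_inv_norm_sub {α : ℝ} (hα : 0 ≤ α + 1) (hz : ‖z‖ ≤ 1) (hw : ‖w‖ ≤ 1) :
    (1 - ‖z‖ ^ 2) ^ (α + 1) * (1 - ‖w‖ ^ 2) ^ α /
        (2 * ‖1 - (starRingEnd ℂ) z * w‖ ^ (α + 1) * ‖z - w‖)
      ≤ 2 ^ α * (1 - ‖w‖ ^ 2) ^ α * ‖z - w‖⁻¹ := by
  set b := ‖1 - (starRingEnd ℂ) z * w‖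
  set d := ‖z - w‖
  set K := (1 - ‖w‖ ^ 2) ^ α
  have hK : 0 ≤ K := rpow_nonneg (by nlinarith [norm_nonneg w]) α
  have hnum : (1 - ‖z‖ ^ 2) ^ (α + 1) ≤ 2 ^ (α + 1) * b ^ (α + 1) := by
    rw [← mul_rpow zero_le_two (norm_nonneg _)]
    exact rpow_le_rpow (by nlinarith [norm_nonneg z])
      (one_sub_norm_sq_le_two_mul_norm_one_sub_conj_mul hz hw) hα
  rcases (show 0 ≤ 2 * b ^ (α + 1) * d by positivity).eq_or_lt with hden | hden
  · rw [← hden, div_zero]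
    positivity
  have hd : d ≠ 0 := fun h => by simp [h] at hden
  rw [div_le_iff₀ hden]
  calc (1 - ‖z‖ ^ 2) ^ (α + 1) * K ≤ 2 ^ (α + 1) * b ^ (α + 1) * K :=
        mul_le_mul_of_nonneg_right hnum hK
    _ = 2 ^ α * K * d⁻¹ * (2 * b ^ (α + 1) * d) := by
        rw [rpow_add_one two_ne_zero]
        field_simp

end Integrand

theorem stmt_5 (α : ℝ) (hα : 0 < α) :
    ∃ c₃ > 0, ∀ w ∈ Metric.ball (0:ℂ) 1,
      (∫ z in Metric.ball (0:ℂ) 1,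
        (1 - ‖z‖^2) ^ (α+1) * (1 - ‖w‖^2) ^ α /
          (2 * ‖1 - (starRingEnd ℂ) z * w‖ ^ (α+1) * ‖z - w‖))
        ≤ c₃ * (1 - ‖w‖^2) ^ α := by
  have hE : 2 ≤ Module.finrank ℝ ℂ := Complex.finrank_real_complex.ge
  set C := ∫ z in ball (0:ℂ) 2, ‖z‖⁻¹
  have hC : 0 ≤ C := setIntegral_nonneg measurableSet_ball fun _ _ => by positivity
  refine ⟨2 ^ α * C + 1, by positivity, fun w hw => ?_⟩
  have hw1 : ‖w‖ ≤ 1 := (mem_ball_zero_iff.1 hw).le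
  have hsub : ball (0:ℂ) 1 ⊆ ball w 2 :=
    ball_subset_ball' (by rw [dist_comm, dist_zero_right]; linarith)
  have hK : 0 ≤ (1 - ‖w‖ ^ 2) ^ α := rpow_nonneg (by nlinarith [norm_nonneg w]) α
  have hdisk : ∀ z ∈ ball (0:ℂ) 1, ‖z‖ ≤ 1 := fun z hz => (mem_ball_zero_iff.1 hz).le
  calc _ ≤ ∫ z in ball (0:ℂ) 1, 2 ^ α * (1 - ‖w‖ ^ 2) ^ α * ‖z - w‖⁻¹ :=
        integral_mono_of_nonneg
          (ae_restrict_of_forall_mem measurableSet_ball fun z hz =>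
            disk_integrand_nonneg α (hdisk z hz) hw1)
          (((integrableOn_ball_inv_norm_sub hE w 2).mono_set hsub).const_mul _)
          (ae_restrict_of_forall_mem measurableSet_ball fun z hz =>
            disk_integrand_le_inv_norm_sub (by linarith) (hdisk z hz) hw1)
    _ = 2 ^ α * (1 - ‖w‖ ^ 2) ^ α * ∫ z in ball (0:ℂ) 1, ‖z - w‖⁻¹ := integral_const_mul _ _
    _ ≤ 2 ^ α * (1 - ‖w‖ ^ 2) ^ α * C :=
        mul_le_mul_of_nonneg_left (setIntegral_inv_norm_sub_le hE hsub) (by positivity)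
    _ ≤ (2 ^ α * C + 1) * (1 - ‖w‖ ^ 2) ^ α := by nlinarith
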